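/- Let A₀ be an (L,S)-uniform 2^{-LS}-set with branching numbers (R_s)_{s∈[S]}, and let 𝒮 ⊆ {0,...,S-1}. Then there exists an (L,S)-uniform subset A ⊆ A₀ with branching numbers (R'_s) satisfying: R'_s = 1 for s ∈ 𝒮 and R'_s = R_s otherwise; |A| ≥ (∏_{s∈𝒮} R_s^{-1})·|A₀|; and for s ∉ 𝒮 and all I ∈ D_{Ls}(A), A^I_L = (A₀)^I_L. -/

import Mathlib

open Set Metric Pointwise

noncomputable section

/-- The half-open dyadic cube of side `2^{-k}` indexed by `j ∈ ℤ^d`. -/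
def dyadicCube (d k : ℕ) (j : Fin d → ℤ) : Set (EuclideanSpace ℝ (Fin d)) :=
  {x | ∀ i, (j i : ℝ) ≤ 2 ^ k * x i ∧ 2 ^ k * x i < j i + 1}

/-- Indices of dyadic cubes of side `2^{-k}` meeting `A`. -/
def covIdx (d k : ℕ) (A : Set (EuclideanSpace ℝ (Fin d))) : Set (Fin d → ℤ) :=
  {j | (A ∩ dyadicCube d k j).Nonempty}

/-- The dyadic covering number `|A|_{2^{-k}}`. -/
def covNum (d k : ℕ) (A : Set (EuclideanSpace ℝ (Fin d))) : ℕ :=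
  (covIdx d k A).ncard

/-- The unit cube `[0,1)^d`. -/
def unitCube (d : ℕ) : Set (EuclideanSpace ℝ (Fin d)) := {x | ∀ i, 0 ≤ x i ∧ x i < 1}

/-- A `2^{-m}`-set : a subset of `2^{-m}ℤ^d ∩ [0,1)^d`. -/
def IsDyadicSet (d m : ℕ) (A : Set (EuclideanSpace ℝ (Fin d))) : Prop :=
  A ⊆ unitCube d ∧ ∀ x ∈ A, ∀ i, ∃ n : ℤ, x i = n / 2 ^ m

/-- `(L,S)`-uniformity with branching numbers `R s`. -/
def IsUniform (d L S : ℕ) (R : ℕ → ℕ) (A : Set (EuclideanSpace ℝ (Fin d))) : Prop :=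
  ∀ s < S, ∀ j ∈ covIdx d (s * L) A,
    covNum d ((s + 1) * L) (A ∩ dyadicCube d (s * L) j) = R s

/-- The homothety mapping the dyadic cube of level `k` with index `j` onto `[0,1)^d`. -/
def renorm (d k : ℕ) (j : Fin d → ℤ) (y : EuclideanSpace ℝ (Fin d)) :
    EuclideanSpace ℝ (Fin d) := WithLp.toLp 2 (fun i => 2 ^ k * y i - j i)

/-- The `2^{-L}`-set associated to a set `B ⊆ [0,1)^d`: representatives `j/2^L` of
dyadic cubes of side `2^{-L}` meeting `B`. -/
def discretize (d L : ℕ) (B : Set (EuclideanSpace ℝ (Fin d))) :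
    Set (EuclideanSpace ℝ (Fin d)) :=
  {x | ∃ j ∈ covIdx d L B, x = fun i => (j i : ℝ) / 2 ^ L}

/-! Collapse one level `s ∈ 𝒮` at a time. Inside every cube of level `sL` keep only the points
of its most populated subcube of level `(s+1)L`; as there are `R_s` occupied subcubes, at least a
`1/R_s`-fraction of the points survives. Every cube of level `sL` keeps a point, so the coarser
levels branch as before, and a surviving subcube loses nothing, so the finer levels are untouched.
The renormalized discretization at a level only sees which children of a cube are occupied. -/

def dyadicIndex (d k : ℕ) (x : EuclideanSpace ℝ (Fin d)) : Fin d → ℤ :=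
  fun i => ⌊(2 : ℝ) ^ k * x i⌋

section Dyadic

variable {d : ℕ}

theorem mem_dyadicCube_iff {k : ℕ} {j : Fin d → ℤ} {x : EuclideanSpace ℝ (Fin d)} :
    x ∈ dyadicCube d k j ↔ dyadicIndex d k x = j := by
  simp only [dyadicCube, mem_ofPred_eq, dyadicIndex, funext_iff, Int.floor_eq_iff]

theorem covIdx_eq_image (k : ℕ) (A : Set (EuclideanSpace ℝ (Fin d))) :
    covIdx d k A = dyadicIndex d k '' A := by
  ext j
  simp only [covIdx, Set.Nonempty, mem_inter_iff, mem_dyadicCube_iff, mem_ofPred_eq, mem_image]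

theorem covIdx_inter_dyadicCube (k k' : ℕ) (j : Fin d → ℤ) (A : Set (EuclideanSpace ℝ (Fin d))) :
    covIdx d k' (A ∩ dyadicCube d k j) = dyadicIndex d k' '' {x ∈ A | dyadicIndex d k x = j} := by
  simp only [covIdx_eq_image, inter_def, mem_dyadicCube_iff]

theorem covIdx_mono {k : ℕ} {A B : Set (EuclideanSpace ℝ (Fin d))} (h : A ⊆ B) :
    covIdx d k A ⊆ covIdx d k B := by
  simpa only [covIdx_eq_image] using image_mono h

theorem dyadicIndex_eq_ediv {k k' : ℕ} (h : k ≤ k') (x : EuclideanSpace ℝ (Fin d)) (i : Fin d) :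
    dyadicIndex d k x i = dyadicIndex d k' x i / 2 ^ (k' - k) := by
  have hpow : (2 : ℝ) ^ k * x i = (2 : ℝ) ^ k' * x i / ((2 ^ (k' - k) : ℕ) : ℝ) := by
    rw [Nat.cast_pow, Nat.cast_ofNat, ← Nat.sub_add_cancel h, pow_add, Nat.add_sub_cancel]
    field_simp
  simp only [dyadicIndex]
  rw [hpow, Int.floor_div_natCast, Nat.cast_pow, Nat.cast_ofNat]

theorem dyadicIndex_eq_of_le {k k' : ℕ} (h : k ≤ k') {x y : EuclideanSpace ℝ (Fin d)}
    (hxy : dyadicIndex d k' x = dyadicIndex d k' y) : dyadicIndex d k x = dyadicIndex d k y := by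
  funext i
  rw [dyadicIndex_eq_ediv h, dyadicIndex_eq_ediv h y, hxy]

theorem IsDyadicSet.finite {m : ℕ} {A : Set (EuclideanSpace ℝ (Fin d))}
    (hA : IsDyadicSet d m A) : A.Finite := by
  have hinj : InjOn (dyadicIndex d m) A := by
    intro x hx y hy hxy
    ext i
    obtain ⟨n, hn⟩ := hA.2 x hx i
    obtain ⟨n', hn'⟩ := hA.2 y hy i
    have hnn' := congrFun hxy i
    simp only [dyadicIndex, hn, hn', mul_div_cancel₀ _ (pow_ne_zero m (two_ne_zero (α := ℝ))),
      Int.floor_intCast] at hnn'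
    rw [hn, hn', hnn']
  refine Finite.of_finite_image ((finite_Icc (0 : Fin d → ℤ) fun _ => 2 ^ m).subset ?_) hinj
  rintro _ ⟨x, hx, rfl⟩
  have hpow : (0 : ℝ) < 2 ^ m := by positivity
  refine ⟨fun i => Int.floor_nonneg.2 (mul_nonneg hpow.le (hA.1 hx i).1), fun i => ?_⟩
  refine Int.cast_le.1 ((Int.floor_le _).trans ?_)
  push_cast
  exact mul_le_of_le_one_right hpow.le (hA.1 hx i).2.le

theorem renorm_preimage_dyadicCube (k L : ℕ) (j j' : Fin d → ℤ) :
    renorm d k j ⁻¹' dyadicCube d L j' = dyadicCube d (k + L) (fun i => 2 ^ L * j i + j' i) := by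
  ext y
  simp only [mem_preimage, dyadicCube, renorm, mem_ofPred_eq, Int.cast_add,
    Int.cast_mul, Int.cast_pow, Int.cast_ofNat]
  refine forall_congr' fun i => ?_
  have hscale : (2 : ℝ) ^ L * (2 ^ k * y i - j i) = 2 ^ (k + L) * y i - 2 ^ L * j i := by ring
  rw [hscale, le_sub_iff_add_le', sub_lt_iff_lt_add', add_assoc]

theorem mem_covIdx_renorm_image_iff {k L : ℕ} {j j' : Fin d → ℤ}
    {B : Set (EuclideanSpace ℝ (Fin d))} :
    j' ∈ covIdx d L (renorm d k j '' B) ↔ (fun i => 2 ^ L * j i + j' i) ∈ covIdx d (k + L) B := by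
  simp only [covIdx, mem_ofPred_eq, image_inter_nonempty_iff, renorm_preimage_dyadicCube]

theorem discretize_renorm_image_congr {k L : ℕ} {j : Fin d → ℤ}
    {B B' : Set (EuclideanSpace ℝ (Fin d))} (h : covIdx d (k + L) B = covIdx d (k + L) B') :
    discretize d L (renorm d k j '' B) = discretize d L (renorm d k j '' B') := by
  have hcov : covIdx d L (renorm d k j '' B) = covIdx d L (renorm d k j '' B') := by
    ext j'
    rw [mem_covIdx_renorm_image_iff, mem_covIdx_renorm_image_iff, h]
  simp only [discretize, hcov]

end Dyadic

namespace Finset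

variable {α β γ : Type*} [DecidableEq β] [DecidableEq γ]

theorem exists_forall_card_filter_le_card_filter [Nonempty γ] (s : Finset α) (p : α → β)
    (q : α → γ) :
    ∃ c : β → γ, ∀ x ∈ s, (∃ y ∈ s, p y = p x ∧ q y = c (p x)) ∧
      #{y ∈ s | p y = p x ∧ q y = q x} ≤ #{y ∈ s | p y = p x ∧ q y = c (p x)} := by
  have hchoice : ∀ j, ∃ m, ∀ x ∈ s, p x = j →
      (∃ y ∈ s, p y = j ∧ q y = m) ∧
        #{y ∈ s | p y = j ∧ q y = q x} ≤ #{y ∈ s | p y = j ∧ q y = m} := by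
    intro j
    by_cases hj : ∃ x ∈ s, p x = j
    · obtain ⟨x₀, hx₀, hx₀j⟩ := hj
      obtain ⟨m, hm, hmax⟩ := exists_max_image ({y ∈ s | p y = j}.image q)
        (fun m => #{y ∈ s | p y = j ∧ q y = m})
        ⟨q x₀, mem_image_of_mem _ (mem_filter.2 ⟨hx₀, hx₀j⟩)⟩
      obtain ⟨y, hy, rfl⟩ := mem_image.1 hm
      exact ⟨q y, fun x hx hxj =>
        ⟨⟨y, (mem_filter.1 hy).1, (mem_filter.1 hy).2, rfl⟩,
          hmax _ (mem_image_of_mem _ (mem_filter.2 ⟨hx, hxj⟩))⟩⟩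
    · exact ⟨Classical.arbitrary γ, fun x hx hxj => (hj ⟨x, hx, hxj⟩).elim⟩
  choose c hc using hchoice
  exact ⟨c, fun x hx => hc _ x hx rfl⟩

theorem card_le_mul_card_filter_of_card_filter_le {s : Finset α} {p : α → β} {q : α → γ}
    {c : β → γ} {R : ℕ} (hR : ∀ j ∈ s.image p, #({y ∈ s | p y = j}.image q) ≤ R)
    (hc : ∀ x ∈ s, #{y ∈ s | p y = p x ∧ q y = q x} ≤ #{y ∈ s | p y = p x ∧ q y = c (p x)}) :
    #s ≤ R * #{x ∈ s | q x = c (p x)} := by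
  have hfiber : ∀ j ∈ s.image p, #{y ∈ s | p y = j} ≤ R * #{y ∈ s | p y = j ∧ q y = c j} := by
    intro j hj
    obtain ⟨x₀, -, rfl⟩ := mem_image.1 hj
    calc #{y ∈ s | p y = p x₀}
        ≤ #{y ∈ s | p y = p x₀ ∧ q y = c (p x₀)} * #({y ∈ s | p y = p x₀}.image q) := by
          refine card_le_mul_card_image _ _ fun m hm => ?_
          obtain ⟨x, hx, rfl⟩ := mem_image.1 hm
          obtain ⟨hxs, hxp⟩ := mem_filter.1 hx
          rw [filter_filter, ← hxp]
          exact hc x hxs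
      _ ≤ _ := by rw [mul_comm]; exact Nat.mul_le_mul_right _ (hR _ hj)
  calc #s = ∑ j ∈ s.image p, #{y ∈ s | p y = j} := card_eq_sum_card_image p s
    _ ≤ ∑ j ∈ s.image p, R * #{y ∈ s | p y = j ∧ q y = c j} := sum_le_sum hfiber
    _ = R * #{x ∈ s | q x = c (p x)} := by
      rw [← mul_sum, card_eq_sum_card_fiberwise (f := p) (t := s.image p)
        fun x hx => mem_image_of_mem p (mem_filter.1 hx).1]
      refine congrArg _ (sum_congr rfl fun j _ => ?_)
      rw [filter_filter]
      refine congrArg card (filter_congr fun y _ => ?_)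
      constructor
      · rintro ⟨rfl, h⟩; exact ⟨h, rfl⟩
      · rintro ⟨h, rfl⟩; exact ⟨rfl, h⟩

end Finset

def collapseAt (d k k' : ℕ) (c : (Fin d → ℤ) → Fin d → ℤ) (A : Set (EuclideanSpace ℝ (Fin d))) :
    Set (EuclideanSpace ℝ (Fin d)) :=
  {x ∈ A | dyadicIndex d k' x = c (dyadicIndex d k x)}

section CollapseAt

variable {d k k' : ℕ} {c : (Fin d → ℤ) → Fin d → ℤ} {A : Set (EuclideanSpace ℝ (Fin d))}

theorem collapseAt_subset : collapseAt d k k' c A ⊆ A := sep_subset _ _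

theorem covIdx_collapseAt_inter_of_le
    (hc : ∀ x ∈ A, ∃ y ∈ A, dyadicIndex d k y = dyadicIndex d k x ∧
      dyadicIndex d k' y = c (dyadicIndex d k x))
    {a b : ℕ} (ha : a ≤ k) (hb : b ≤ k) (j : Fin d → ℤ) :
    covIdx d b (collapseAt d k k' c A ∩ dyadicCube d a j) = covIdx d b (A ∩ dyadicCube d a j) := by
  refine (covIdx_mono (inter_subset_inter_left _ collapseAt_subset)).antisymm ?_
  rw [covIdx_inter_dyadicCube, covIdx_inter_dyadicCube]
  rintro _ ⟨x, ⟨hx, rfl⟩, rfl⟩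
  obtain ⟨y, hy, hyk, hyk'⟩ := hc x hx
  exact ⟨y, ⟨⟨hy, hyk ▸ hyk'⟩, dyadicIndex_eq_of_le ha hyk⟩, dyadicIndex_eq_of_le hb hyk⟩

theorem collapseAt_inter_dyadicCube_of_le (hk : k ≤ k') {a : ℕ} (ha : k' ≤ a) {j : Fin d → ℤ}
    (hj : j ∈ covIdx d a (collapseAt d k k' c A)) :
    collapseAt d k k' c A ∩ dyadicCube d a j = A ∩ dyadicCube d a j := by
  rw [covIdx_eq_image] at hj
  obtain ⟨x, ⟨-, hxc⟩, rfl⟩ := hj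
  refine (inter_subset_inter_left _ collapseAt_subset).antisymm ?_
  rintro y ⟨hy, hya⟩
  have hyx : dyadicIndex d a y = dyadicIndex d a x := mem_dyadicCube_iff.1 hya
  refine ⟨⟨hy, ?_⟩, hya⟩
  rw [dyadicIndex_eq_of_le ha hyx, dyadicIndex_eq_of_le (hk.trans ha) hyx, hxc]

theorem covIdx_collapseAt_inter_dyadicCube_self {j : Fin d → ℤ}
    (hj : j ∈ covIdx d k (collapseAt d k k' c A)) :
    covIdx d k' (collapseAt d k k' c A ∩ dyadicCube d k j) = {c j} := by
  rw [covIdx_eq_image] at hj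
  obtain ⟨x₀, hx₀, rfl⟩ := hj
  rw [covIdx_inter_dyadicCube]
  refine subset_antisymm ?_ (singleton_subset_iff.2 ⟨x₀, ⟨hx₀, rfl⟩, hx₀.2⟩)
  rintro _ ⟨x, ⟨⟨-, hxc⟩, hxk⟩, rfl⟩
  rw [mem_singleton_iff, hxc, hxk]

/-- `c` selects in every cube of level `k` its most populated subcube of level `k'`. -/
theorem Set.Finite.exists_collapseAt (hfin : A.Finite) {R : ℕ}
    (hR : ∀ j ∈ covIdx d k A, (covIdx d k' (A ∩ dyadicCube d k j)).ncard ≤ R) :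
    ∃ c : (Fin d → ℤ) → Fin d → ℤ,
      (∀ x ∈ A, ∃ y ∈ A, dyadicIndex d k y = dyadicIndex d k x ∧
        dyadicIndex d k' y = c (dyadicIndex d k x)) ∧
      A.ncard ≤ R * (collapseAt d k k' c A).ncard := by
  classical
  obtain ⟨c, hc⟩ := hfin.toFinset.exists_forall_card_filter_le_card_filter
    (dyadicIndex d k) (dyadicIndex d k')
  refine ⟨c, fun x hx => ?_, ?_⟩
  · obtain ⟨y, hy, hyc⟩ := (hc x (hfin.mem_toFinset.2 hx)).1
    exact ⟨y, hfin.mem_toFinset.1 hy, hyc⟩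
  have hA : A.ncard = hfin.toFinset.card := by
    rw [← ncard_coe_finset, hfin.coe_toFinset]
  have hcollapse : (collapseAt d k k' c A).ncard =
      (hfin.toFinset.filter fun x => dyadicIndex d k' x = c (dyadicIndex d k x)).card := by
    rw [← ncard_coe_finset, Finset.coe_filter]
    simp only [Set.Finite.mem_toFinset]
    rfl
  rw [hA, hcollapse]
  refine Finset.card_le_mul_card_filter_of_card_filter_le (fun j hj => ?_) fun x hx => (hc x hx).2
  rw [← ncard_coe_finset, Finset.coe_image, Finset.coe_filter]
  simp only [Set.Finite.mem_toFinset]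
  rw [← covIdx_inter_dyadicCube]
  refine hR j ?_
  obtain ⟨x, hx, rfl⟩ := Finset.mem_image.1 hj
  exact covIdx_eq_image k A ▸ mem_image_of_mem _ (hfin.mem_toFinset.1 hx)

end CollapseAt

def childIdx (d L s : ℕ) (A : Set (EuclideanSpace ℝ (Fin d))) (j : Fin d → ℤ) : Set (Fin d → ℤ) :=
  covIdx d ((s + 1) * L) (A ∩ dyadicCube d (s * L) j)

section Uniform

variable {d L S : ℕ} {R : ℕ → ℕ} {A₀ : Set (EuclideanSpace ℝ (Fin d))}

theorem IsUniform.exists_collapse_level (hfin : A₀.Finite) (hunif : IsUniform d L S R A₀)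
    {s₀ : ℕ} (hs₀ : s₀ < S) :
    ∃ A ⊆ A₀, IsUniform d L S (Function.update R s₀ 1) A ∧ A₀.ncard ≤ R s₀ * A.ncard ∧
      ∀ s ≠ s₀, ∀ j ∈ covIdx d (s * L) A, childIdx d L s A j = childIdx d L s A₀ j := by
  obtain ⟨c, hc, hcard⟩ := hfin.exists_collapseAt (k := s₀ * L) (k' := (s₀ + 1) * L)
    fun j hj => (hunif s₀ hs₀ j hj).le
  set A := collapseAt d (s₀ * L) ((s₀ + 1) * L) c A₀
  have hchild : ∀ s ≠ s₀, ∀ j ∈ covIdx d (s * L) A, childIdx d L s A j = childIdx d L s A₀ j := by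
    intro s hs j hj
    rcases hs.lt_or_gt with h | h
    · exact covIdx_collapseAt_inter_of_le hc (Nat.mul_le_mul_right _ h.le)
        (Nat.mul_le_mul_right _ h) j
    · rw [childIdx, collapseAt_inter_dyadicCube_of_le (Nat.mul_le_mul_right _ s₀.le_succ)
        (Nat.mul_le_mul_right _ h) hj, childIdx]
  refine ⟨A, collapseAt_subset, fun s hs j hj => ?_, hcard, hchild⟩
  rcases eq_or_ne s s₀ with rfl | hne
  · rw [covNum, covIdx_collapseAt_inter_dyadicCube_self hj, ncard_singleton,
      Function.update_self]
  · rw [Function.update_of_ne hne, covNum, ← childIdx, hchild s hne j hj]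
    exact hunif s hs j (covIdx_mono collapseAt_subset hj)

theorem IsUniform.exists_collapse (hfin : A₀.Finite) (hunif : IsUniform d L S R A₀)
    {𝒮 : Finset ℕ} (h𝒮 : 𝒮 ⊆ Finset.range S) :
    ∃ A ⊆ A₀, IsUniform d L S (fun s => if s ∈ 𝒮 then 1 else R s) A ∧
      A₀.ncard ≤ (∏ s ∈ 𝒮, R s) * A.ncard ∧
      ∀ s ∉ 𝒮, ∀ j ∈ covIdx d (s * L) A, childIdx d L s A j = childIdx d L s A₀ j := by
  classical
  induction 𝒮 using Finset.induction_on generalizing R A₀ with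
  | empty => exact ⟨A₀, subset_rfl, by simpa using hunif, by simp, fun _ _ _ _ => rfl⟩
  | @insert s₀ 𝒮 hs₀𝒮 ih =>
    have hs₀ : s₀ < S := Finset.mem_range.1 (h𝒮 (Finset.mem_insert_self s₀ 𝒮))
    obtain ⟨A₁, hA₁, hunif₁, hcard₁, hchild₁⟩ := hunif.exists_collapse_level hfin hs₀
    obtain ⟨A, hA, hunif₂, hcard₂, hchild₂⟩ :=
      ih (hfin.subset hA₁) hunif₁ ((Finset.subset_insert s₀ 𝒮).trans h𝒮)
    refine ⟨A, hA.trans hA₁, ?_, ?_, fun s hs j hj => ?_⟩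
    · convert hunif₂ using 2 with s
      by_cases hs : s = s₀ <;> simp [hs, hs₀𝒮]
    · rw [Finset.prod_insert hs₀𝒮, mul_assoc, ← Finset.prod_update_of_notMem hs₀𝒮 R 1]
      exact hcard₁.trans (Nat.mul_le_mul_left _ hcard₂)
    · rw [Finset.mem_insert, not_or] at hs
      rw [hchild₂ s hs.2 j hj, hchild₁ s hs.1 j (covIdx_mono hA hj)]

end Uniform

theorem prod_inv_mul_le_of_le_prod_mul {ι : Type*} (s : Finset ι) (R : ι → ℕ) {n m : ℕ}
    (h : n ≤ (∏ i ∈ s, R i) * m) : (∏ i ∈ s, (R i : ℝ)⁻¹) * n ≤ m := by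
  rw [Finset.prod_inv_distrib]
  rcases eq_or_ne (∏ i ∈ s, (R i : ℝ)) 0 with h0 | h0
  · rw [h0, inv_zero, zero_mul]
    exact m.cast_nonneg
  · rw [inv_mul_le_iff₀ (lt_of_le_of_ne (by positivity) h0.symm)]
    exact_mod_cast h

/-- **Collapsing the branching**: given an `(L,S)`-uniform set `A₀` with branching numbers
`(R_s)` and a set of levels `𝒮 ⊆ {0,…,S-1}`, there is an `(L,S)`-uniform subset `A ⊆ A₀`
whose branching numbers are `1` at levels of `𝒮` and `R_s` elsewhere, with
`|A| ≥ (∏_{s∈𝒮} R_s⁻¹)|A₀|`, and whose renormalized `2^{-L}`-discretizations agree with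
those of `A₀` at all levels outside `𝒮`. -/
theorem collapse_branching (d L S : ℕ) (R : ℕ → ℕ) (A₀ : Set (EuclideanSpace ℝ (Fin d)))
    (hA₀ : IsDyadicSet d (L * S) A₀) (hunif : IsUniform d L S R A₀)
    (𝒮 : Finset ℕ) (h𝒮 : 𝒮 ⊆ Finset.range S) :
    ∃ A ⊆ A₀, IsUniform d L S (fun s => if s ∈ 𝒮 then 1 else R s) A ∧
      (A.ncard : ℝ) ≥ (∏ s ∈ 𝒮, ((R s : ℝ))⁻¹) * A₀.ncard ∧
      ∀ s < S, s ∉ 𝒮 → ∀ j ∈ covIdx d (s * L) A,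
        discretize d L (renorm d (s * L) j '' (A ∩ dyadicCube d (s * L) j)) =
          discretize d L (renorm d (s * L) j '' (A₀ ∩ dyadicCube d (s * L) j)) := by
  obtain ⟨A, hA, hunifA, hcard, hchild⟩ := hunif.exists_collapse hA₀.finite h𝒮
  refine ⟨A, hA, hunifA, prod_inv_mul_le_of_le_prod_mul 𝒮 R hcard, fun s _ hs j hj => ?_⟩
  apply discretize_renorm_image_congr
  rw [← add_one_mul]
  exact hchild s hs j hj
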